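/- Let B ∈ ℂ with 0 < |B| < 1 and let Λ = diag(B^{−1}, B). Let {A_n}_{n≥1} be 2×2 complex matrices such that Σ_{n=1}^∞ ‖A_n‖² < ∞, Λ + A_n is invertible for every n, and the partial sums Σ_{n=1}^N (A_n)_{1,1} and Σ_{n=1}^N (A_n)_{2,2} converge to finite limits as N → ∞. Then for any nonzero initial vector (φ_1, ψ_1) ∈ ℂ², the solution of (φ_{n+1}, ψ_{n+1})ᵀ = (Λ + A_n)(φ_n, ψ_n)ᵀ satisfies exactly one of the following: either there is c_1 ≠ 0 with B^n (φ_n, ψ_n) → (c_1, 0) as n → ∞, or there is c_2 ≠ 0 with B^{−n} (φ_n, ψ_n) → (0, c_2) as n → ∞. -/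

import Mathlib

/-!
Once the entries of `Aₙ` are small, the cone `‖ψ‖ ≤ ‖φ‖` is forward invariant. If the orbit
enters it, the ratio `ρₙ = ‖ψₙ‖ / ‖φₙ‖` satisfies `ρₙ₊₁ ≤ θ ρₙ + ‖(Aₙ)₂₁‖` with `θ < 1`, hence
is square summable; if it never does, `σₙ = ‖φₙ‖ / ‖ψₙ‖ ≤ 1` satisfies the backward inequality
`σₙ ≤ θ σₙ₊₁ + ‖(Aₙ)₁₂‖` and is square summable as well. In either case the dominant coordinate,
rescaled by `B^{±n}`, is multiplied at step `n` by `1 + tₙ`, where `tₙ` is `B^{∓1}` times the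
corresponding diagonal entry of `Aₙ` plus a summable term. So `Σ tₙ` converges and
`Σ ‖tₙ‖² < ∞`, and since `log (1 + t) - t = O(t²)` the product `∏ (1 + tₙ)` converges to
`exp (Σ log (1 + tₙ)) ≠ 0`. The alternatives exclude each other because
`Bⁿ yₙ = B²ⁿ (B⁻ⁿ yₙ) → 0`.
-/

open Filter Topology Finset Matrix

theorem tendsto_cofinite_zero_of_summable_sq_norm {ι E : Type*} [SeminormedAddCommGroup E]
    {f : ι → E} (hf : Summable fun i => ‖f i‖ ^ 2) : Tendsto f cofinite (𝓝 0) := by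
  rw [tendsto_zero_iff_norm_tendsto_zero]
  simpa using hf.tendsto_cofinite_zero.sqrt

theorem summable_log_one_add_sub_self {ι : Type*} {t : ι → ℂ}
    (ht : Summable fun i => ‖t i‖ ^ 2) :
    Summable fun i => Complex.log (1 + t i) - t i := by
  have h := (Complex.log_sub_self_isBigO.comp_tendsto
    (tendsto_cofinite_zero_of_summable_sq_norm ht)).norm_right
  simp only [Function.comp_def, norm_pow] at h
  exact summable_of_isBigO ht h

theorem exists_tendsto_ne_zero_of_eventually_mul_exp {w g : ℕ → ℂ} {L : ℂ}
    (hg : Tendsto (fun N => ∑ n ∈ range N, g n) atTop (𝓝 L))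
    (hw : ∀ᶠ n in atTop, w (n + 1) = w n * Complex.exp (g n))
    (hw0 : ∃ᶠ n in atTop, w n ≠ 0) :
    ∃ c ≠ 0, Tendsto w atTop (𝓝 c) := by
  obtain ⟨N, hN⟩ := eventually_atTop.mp hw
  obtain ⟨m, hmN, hm⟩ := frequently_atTop.mp hw0 N
  have hprod : ∀ n ≥ m,
      w n = w m * Complex.exp (∑ k ∈ range n, g k - ∑ k ∈ range m, g k) := by
    intro n hn
    induction n, hn using Nat.le_induction with
    | base => simp
    | succ n hmn ih =>
      rw [hN n (hmN.trans hmn), ih, sum_range_succ, mul_assoc, ← Complex.exp_add]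
      ring_nf
  refine ⟨w m * Complex.exp (L - ∑ k ∈ range m, g k), mul_ne_zero hm (Complex.exp_ne_zero _), ?_⟩
  refine Tendsto.congr' ?_ (((hg.sub_const _).cexp).const_mul (w m))
  filter_upwards [eventually_ge_atTop m] with n hn using (hprod n hn).symm

theorem exists_tendsto_ne_zero_of_eventually_mul_one_add {w t : ℕ → ℂ} {L : ℂ}
    (ht : Tendsto (fun N => ∑ n ∈ range N, t n) atTop (𝓝 L))
    (ht2 : Summable fun n => ‖t n‖ ^ 2)
    (hw : ∀ᶠ n in atTop, w (n + 1) = w n * (1 + t n))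
    (hw0 : ∃ᶠ n in atTop, w n ≠ 0) :
    ∃ c ≠ 0, Tendsto w atTop (𝓝 c) := by
  have hlog := (summable_log_one_add_sub_self ht2).hasSum.tendsto_sum_nat
  refine exists_tendsto_ne_zero_of_eventually_mul_exp (g := fun n => Complex.log (1 + t n))
    ((ht.add hlog).congr fun N => by simp) ?_ hw0
  have ht0 : Tendsto t atTop (𝓝 0) :=
    Nat.cofinite_eq_atTop ▸ tendsto_cofinite_zero_of_summable_sq_norm ht2
  filter_upwards [hw, ht0.eventually_ne (by norm_num : (0 : ℂ) ≠ -1)] with n hwn htn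
  have h1 : 1 + t n ≠ 0 := fun h => htn (by linear_combination h)
  rw [hwn, Complex.exp_log h1]

/-- Convexity of `x ↦ x ^ 2` at the point `θ * a + (1 - θ) * (c / (1 - θ))`. -/
theorem sq_le_mul_sq_add_sq_div {θ a c x : ℝ} (hθ0 : 0 ≤ θ) (hθ1 : θ < 1) (hx0 : 0 ≤ x)
    (hx : x ≤ θ * a + c) : x ^ 2 ≤ θ * a ^ 2 + c ^ 2 / (1 - θ) := by
  have h1 : 0 < 1 - θ := by linarith
  have key : θ * a ^ 2 + c ^ 2 / (1 - θ) - (θ * a + c) ^ 2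
      = θ * ((1 - θ) * a - c) ^ 2 / (1 - θ) := by
    field_simp; ring
  have : 0 ≤ θ * ((1 - θ) * a - c) ^ 2 / (1 - θ) := by positivity
  nlinarith

theorem summable_of_le_mul_add {s u : ℕ → ℝ} {θ : ℝ} (hθ0 : 0 ≤ θ) (hθ1 : θ < 1)
    (hs : ∀ n, 0 ≤ s n) (hu0 : ∀ n, 0 ≤ u n) (hu : Summable u)
    (h : ∀ n, s (n + 1) ≤ θ * s n + u n) : Summable s := by
  refine summable_of_sum_range_le hs (c := (s 0 + ∑' n, u n) / (1 - θ)) fun N => ?_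
  have hmono : ∑ n ∈ range N, s n ≤ ∑ n ∈ range (N + 1), s n := by
    rw [sum_range_succ]; linarith [hs N]
  have key : ∑ n ∈ range (N + 1), s n ≤ s 0 + θ * ∑ n ∈ range (N + 1), s n + ∑' n, u n :=
    calc ∑ n ∈ range (N + 1), s n = ∑ n ∈ range N, s (n + 1) + s 0 := sum_range_succ' _ _
      _ ≤ ∑ n ∈ range N, (θ * s n + u n) + s 0 := by gcongr with n; exact h n
      _ = θ * ∑ n ∈ range N, s n + ∑ n ∈ range N, u n + s 0 := by
        rw [sum_add_distrib, mul_sum]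
      _ ≤ s 0 + θ * ∑ n ∈ range (N + 1), s n + ∑' n, u n := by
        have := hu.sum_le_tsum (range N) fun n _ => hu0 n
        nlinarith
  rw [le_div_iff₀ (by linarith)]
  nlinarith

theorem summable_of_le_mul_succ_add {s u : ℕ → ℝ} {θ K : ℝ} (hθ0 : 0 ≤ θ) (hθ1 : θ < 1)
    (hs : ∀ n, 0 ≤ s n) (hsK : ∀ n, s n ≤ K) (hu0 : ∀ n, 0 ≤ u n) (hu : Summable u)
    (h : ∀ n, s n ≤ θ * s (n + 1) + u n) : Summable s := by
  refine summable_of_sum_range_le hs (c := (θ * K + ∑' n, u n) / (1 - θ)) fun N => ?_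
  have hshift : ∑ n ∈ range N, s (n + 1) ≤ ∑ n ∈ range N, s n + K := by
    have h1 := sum_range_succ' s N
    have h2 := sum_range_succ s N
    linarith [hs 0, hsK N]
  have key : ∑ n ∈ range N, s n ≤ θ * (∑ n ∈ range N, s n + K) + ∑' n, u n :=
    calc ∑ n ∈ range N, s n ≤ ∑ n ∈ range N, (θ * s (n + 1) + u n) := by
          gcongr with n; exact h n
      _ = θ * ∑ n ∈ range N, s (n + 1) + ∑ n ∈ range N, u n := by
        rw [sum_add_distrib, mul_sum]
      _ ≤ θ * (∑ n ∈ range N, s n + K) + ∑' n, u n := by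
        gcongr
        exact hu.sum_le_tsum (range N) fun n _ => hu0 n
  rw [le_div_iff₀ (by linarith)]
  nlinarith

theorem summable_sq_of_eventually_le_mul_add {s u : ℕ → ℝ} {θ : ℝ} (hθ0 : 0 ≤ θ) (hθ1 : θ < 1)
    (hs : ∀ n, 0 ≤ s n) (hu : Summable fun n => u n ^ 2)
    (h : ∀ᶠ n in atTop, s (n + 1) ≤ θ * s n + u n) : Summable fun n => s n ^ 2 := by
  obtain ⟨m, hm⟩ := eventually_atTop.mp h
  rw [← summable_nat_add_iff m]
  refine summable_of_le_mul_add hθ0 hθ1 (fun n => sq_nonneg _)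
    (fun n => div_nonneg (sq_nonneg _) (by linarith))
    (((summable_nat_add_iff m).mpr hu).div_const (1 - θ)) fun n => ?_
  rw [show n + 1 + m = n + m + 1 by omega]
  exact sq_le_mul_sq_add_sq_div hθ0 hθ1 (hs _) (hm (n + m) (by omega))

theorem summable_sq_of_eventually_le_mul_succ_add {s u : ℕ → ℝ} {θ K : ℝ} (hθ0 : 0 ≤ θ)
    (hθ1 : θ < 1) (hs : ∀ n, 0 ≤ s n) (hsK : ∀ᶠ n in atTop, s n ≤ K)
    (hu : Summable fun n => u n ^ 2)
    (h : ∀ᶠ n in atTop, s n ≤ θ * s (n + 1) + u n) : Summable fun n => s n ^ 2 := by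
  obtain ⟨m, hm⟩ := eventually_atTop.mp (hsK.and h)
  rw [← summable_nat_add_iff m]
  refine summable_of_le_mul_succ_add hθ0 hθ1 (fun n => sq_nonneg _)
    (fun n => pow_le_pow_left₀ (hs _) (hm (n + m) (by omega)).1 2)
    (fun n => div_nonneg (sq_nonneg _) (by linarith))
    (((summable_nat_add_iff m).mpr hu).div_const (1 - θ)) fun n => ?_
  rw [show n + 1 + m = n + m + 1 by omega]
  exact sq_le_mul_sq_add_sq_div hθ0 hθ1 (hs _) (hm (n + m) (by omega)).2

theorem exists_tendsto_inv_pow_mul_of_summable_sq_ratio {μ L : ℂ} (hμ : μ ≠ 0)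
    {X Y α β : ℕ → ℂ}
    (hrec : ∀ᶠ n in atTop, X (n + 1) = (μ + α n) * X n + β n * Y n)
    (hX : ∀ᶠ n in atTop, X n ≠ 0) (hratio : Summable fun n => (‖Y n‖ / ‖X n‖) ^ 2)
    (hα : Tendsto (fun N => ∑ n ∈ range N, α n) atTop (𝓝 L))
    (hα2 : Summable fun n => ‖α n‖ ^ 2) (hβ2 : Summable fun n => ‖β n‖ ^ 2) :
    ∃ c ≠ 0, Tendsto (fun n => μ⁻¹ ^ n * X n) atTop (𝓝 c) ∧
      Tendsto (fun n => μ⁻¹ ^ n * Y n) atTop (𝓝 0) := by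
  set q : ℕ → ℂ := fun n => Y n / X n
  have hq2 : Summable fun n => ‖q n‖ ^ 2 := by simpa only [q, norm_div] using hratio
  have hq0 : Tendsto q atTop (𝓝 0) :=
    Nat.cofinite_eq_atTop ▸ tendsto_cofinite_zero_of_summable_sq_norm hq2
  have hβq : Summable fun n => β n * q n :=
    .of_norm_bounded ((hβ2.add hq2).div_const 2) fun n => by
      rw [norm_mul]; nlinarith [sq_nonneg (‖β n‖ - ‖q n‖)]
  set t : ℕ → ℂ := fun n => μ⁻¹ * (α n + β n * q n)
  have ht : Tendsto (fun N => ∑ n ∈ range N, t n) atTop (𝓝 (μ⁻¹ * (L + ∑' n, β n * q n))) :=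
    ((hα.add hβq.hasSum.tendsto_sum_nat).const_mul μ⁻¹).congr fun N => by
      rw [← sum_add_distrib, mul_sum]
  have ht2 : Summable fun n => ‖t n‖ ^ 2 := by
    refine .of_norm_bounded_eventually ((hα2.add hβ2).mul_left (2 * ‖μ⁻¹‖ ^ 2)) ?_
    filter_upwards [Nat.cofinite_eq_atTop ▸
      hq0.norm.eventually (ge_mem_nhds (by simp : ‖(0 : ℂ)‖ < 1))] with n hn
    have hβq : ‖β n * q n‖ ≤ ‖β n‖ := by
      rw [norm_mul]; exact mul_le_of_le_one_right (norm_nonneg _) hn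
    have hsum : ‖α n + β n * q n‖ ≤ ‖α n‖ + ‖β n‖ := (norm_add_le _ _).trans (by linarith)
    simp only [t, norm_pow, norm_norm, norm_mul, mul_pow]
    nlinarith [pow_le_pow_left₀ (norm_nonneg _) hsum 2, sq_nonneg (‖α n‖ - ‖β n‖),
      sq_nonneg ‖μ⁻¹‖]
  set w : ℕ → ℂ := fun n => μ⁻¹ ^ n * X n
  have hw : ∀ᶠ n in atTop, w (n + 1) = w n * (1 + t n) := by
    filter_upwards [hrec, hX] with n hrecn hXn
    simp only [w, t, q, hrecn, pow_succ]
    field_simp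
    ring
  have hw0 : ∀ᶠ n in atTop, w n ≠ 0 := by
    filter_upwards [hX] with n hXn using mul_ne_zero (pow_ne_zero _ (inv_ne_zero hμ)) hXn
  obtain ⟨c, hc, hwc⟩ := exists_tendsto_ne_zero_of_eventually_mul_one_add ht ht2 hw hw0.frequently
  refine ⟨c, hc, hwc, ?_⟩
  refine Tendsto.congr' ?_ (by simpa using hq0.mul hwc)
  filter_upwards [hX] with n hXn
  simp only [q, w]
  field_simp

section TwoByTwo

variable {𝕜 : Type*} [NormedField 𝕜] (p r : 𝕜) (M : Matrix (Fin 2) (Fin 2) 𝕜) (v : Fin 2 → 𝕜)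

theorem diagonal_add_mulVec_apply_zero :
    ((diagonal ![p, r] + M) *ᵥ v) 0 = (p + M 0 0) * v 0 + M 0 1 * v 1 := by
  simp [mulVec, dotProduct, Fin.sum_univ_two, add_mul]

theorem diagonal_add_mulVec_apply_one :
    ((diagonal ![p, r] + M) *ᵥ v) 1 = M 1 0 * v 0 + (r + M 1 1) * v 1 := by
  simp [mulVec, dotProduct, Fin.sum_univ_two, add_mul]

theorem sub_mul_norm_le_norm_diagonal_add_mulVec_apply_zero :
    (‖p‖ - ‖M 0 0‖) * ‖v 0‖ ≤ ‖((diagonal ![p, r] + M) *ᵥ v) 0‖ + ‖M 0 1‖ * ‖v 1‖ := by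
  set w := ((diagonal ![p, r] + M) *ᵥ v) 0 with hw
  have hpv : p * v 0 = w - M 0 0 * v 0 - M 0 1 * v 1 := by
    rw [hw, diagonal_add_mulVec_apply_zero]; ring
  have h₁ := norm_sub_le (w - M 0 0 * v 0) (M 0 1 * v 1)
  have h₂ := norm_sub_le w (M 0 0 * v 0)
  rw [← hpv] at h₁
  simp only [norm_mul] at h₁ h₂
  linarith

theorem norm_diagonal_add_mulVec_apply_one_le :
    ‖((diagonal ![p, r] + M) *ᵥ v) 1‖ ≤ ‖M 1 0‖ * ‖v 0‖ + (‖r‖ + ‖M 1 1‖) * ‖v 1‖ := by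
  rw [diagonal_add_mulVec_apply_one]
  refine (norm_add_le _ _).trans ?_
  rw [norm_mul, norm_mul]
  gcongr
  exact norm_add_le _ _

end TwoByTwo

section ConeSteps

variable {𝕜 : Type*} [NormedField 𝕜] {B : 𝕜} {ε : ℝ} {M : Matrix (Fin 2) (Fin 2) 𝕜}
  {v v' : Fin 2 → 𝕜}

theorem two_sub_le_inv {r : ℝ} (hr : 0 < r) : 2 - r ≤ r⁻¹ := by
  rw [← one_div, le_div_iff₀ hr]
  nlinarith [sq_nonneg (1 - r)]

/-- The hypothesis on `ε` gives `‖B‖ + 2 * ε ≤ 1 ≤ ‖B‖⁻¹ - 2 * ε`, via `two_sub_le_inv`. -/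
theorem cone_step_of_norm_one_le_norm_zero (hB : B ≠ 0) (hε : 3 * ε ≤ 1 - ‖B‖)
    (hM : ∀ i j, ‖M i j‖ ≤ ε) (hv' : v' = (diagonal ![B⁻¹, B] + M) *ᵥ v) (hv0 : v 0 ≠ 0)
    (hv : ‖v 1‖ ≤ ‖v 0‖) :
    ‖v 0‖ ≤ ‖v' 0‖ ∧ ‖v' 1‖ ≤ ‖v' 0‖ ∧
      ‖v' 1‖ / ‖v' 0‖ ≤ (‖B‖ + ε) * (‖v 1‖ / ‖v 0‖) + ‖M 1 0‖ := by
  have hr : 0 < ‖B‖ := norm_pos_iff.mpr hB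
  have hv0' : 0 < ‖v 0‖ := norm_pos_iff.mpr hv0
  have h0 := sub_mul_norm_le_norm_diagonal_add_mulVec_apply_zero B⁻¹ B M v
  have h1 := norm_diagonal_add_mulVec_apply_one_le B⁻¹ B M v
  rw [← hv', norm_inv] at h0
  rw [← hv'] at h1
  have hrinv := two_sub_le_inv hr
  have hε0 : 0 ≤ ε := (norm_nonneg _).trans (hM 0 0)
  have hgrow : ‖v 0‖ ≤ ‖v' 0‖ := by
    have : ‖M 0 1‖ * ‖v 1‖ ≤ ε * ‖v 0‖ := mul_le_mul (hM 0 1) hv (norm_nonneg _) hε0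
    have : (‖B‖⁻¹ - ε) * ‖v 0‖ ≤ (‖B‖⁻¹ - ‖M 0 0‖) * ‖v 0‖ := by gcongr; exact hM 0 0
    have : ‖v 0‖ ≤ (‖B‖⁻¹ - 2 * ε) * ‖v 0‖ :=
      le_mul_of_one_le_left (norm_nonneg _) (by linarith)
    linarith
  have hv'1 : ‖v' 1‖ ≤ ‖M 1 0‖ * ‖v 0‖ + (‖B‖ + ε) * ‖v 1‖ :=
    h1.trans (by gcongr; exact hM 1 1)
  refine ⟨hgrow, ?_, ?_⟩
  · calc ‖v' 1‖ ≤ ‖M 1 0‖ * ‖v 0‖ + (‖B‖ + ε) * ‖v 1‖ := hv'1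
      _ ≤ ε * ‖v 0‖ + (‖B‖ + ε) * ‖v 0‖ := by gcongr; exact hM 1 0
      _ ≤ ‖v 0‖ := by nlinarith
      _ ≤ ‖v' 0‖ := hgrow
  · calc ‖v' 1‖ / ‖v' 0‖ ≤ ‖v' 1‖ / ‖v 0‖ := by gcongr
      _ ≤ (‖M 1 0‖ * ‖v 0‖ + (‖B‖ + ε) * ‖v 1‖) / ‖v 0‖ := by gcongr
      _ = (‖B‖ + ε) * (‖v 1‖ / ‖v 0‖) + ‖M 1 0‖ := by field_simp; ring

theorem ratio_le_of_norm_zero_lt_norm_one (hB : B ≠ 0) (hε : 3 * ε ≤ 1 - ‖B‖)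
    (hM : ∀ i j, ‖M i j‖ ≤ ε) (hv' : v' = (diagonal ![B⁻¹, B] + M) *ᵥ v)
    (hv : ‖v 0‖ < ‖v 1‖) (hv'lt : ‖v' 0‖ < ‖v' 1‖) :
    ‖v 0‖ / ‖v 1‖ ≤ (‖B‖ + 2 * ε) * (‖v' 0‖ / ‖v' 1‖) + ‖M 0 1‖ := by
  have hr : 0 < ‖B‖ := norm_pos_iff.mpr hB
  have hv1 : 0 < ‖v 1‖ := (norm_nonneg _).trans_lt hv
  have hv'1 : 0 < ‖v' 1‖ := (norm_nonneg _).trans_lt hv'lt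
  have h0 := sub_mul_norm_le_norm_diagonal_add_mulVec_apply_zero B⁻¹ B M v
  have h1 := norm_diagonal_add_mulVec_apply_one_le B⁻¹ B M v
  rw [← hv', norm_inv] at h0
  rw [← hv'] at h1
  have hrinv := two_sub_le_inv hr
  have hε0 : 0 ≤ ε := (norm_nonneg _).trans (hM 0 0)
  have hdecay : ‖v' 1‖ ≤ (‖B‖ + 2 * ε) * ‖v 1‖ :=
    calc ‖v' 1‖ ≤ ‖M 1 0‖ * ‖v 0‖ + (‖B‖ + ‖M 1 1‖) * ‖v 1‖ := h1
      _ ≤ ε * ‖v 1‖ + (‖B‖ + ε) * ‖v 1‖ := by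
        gcongr
        exacts [hM 1 0, hM 1 1]
      _ = (‖B‖ + 2 * ε) * ‖v 1‖ := by ring
  have hv0 : ‖v 0‖ ≤ ‖v' 0‖ + ‖M 0 1‖ * ‖v 1‖ :=
    calc ‖v 0‖ ≤ (‖B‖⁻¹ - ε) * ‖v 0‖ := le_mul_of_one_le_left (norm_nonneg _) (by linarith)
      _ ≤ (‖B‖⁻¹ - ‖M 0 0‖) * ‖v 0‖ := by gcongr; exact hM 0 0
      _ ≤ ‖v' 0‖ + ‖M 0 1‖ * ‖v 1‖ := h0
  have hv'0 : ‖v' 0‖ ≤ ‖v' 0‖ / ‖v' 1‖ * ((‖B‖ + 2 * ε) * ‖v 1‖) := by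
    rw [div_mul_eq_mul_div, le_div_iff₀ hv'1]
    gcongr
  rw [div_le_iff₀ hv1]
  nlinarith

end ConeSteps

theorem tendsto_nhds_vecCons_two {α X : Type*} [TopologicalSpace X] {l : Filter α}
    {f : α → Fin 2 → X} {a b : X} (h0 : Tendsto (fun x => f x 0) l (𝓝 a))
    (h1 : Tendsto (fun x => f x 1) l (𝓝 b)) : Tendsto f l (𝓝 ![a, b]) :=
  tendsto_pi_nhds.mpr (Fin.forall_fin_two.mpr ⟨h0, h1⟩)

theorem eventually_forall_norm_apply_le {m n : Type*} [Finite m] [Finite n] {𝕜 : Type*}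
    [NormedField 𝕜] {A : ℕ → Matrix m n 𝕜} (hA : ∀ i j, Summable fun k => ‖A k i j‖ ^ 2)
    {ε : ℝ} (hε : 0 < ε) : ∀ᶠ k in atTop, ∀ i j, ‖A k i j‖ ≤ ε := by
  simp only [eventually_all]
  intro i j
  have h := Nat.cofinite_eq_atTop ▸ tendsto_cofinite_zero_of_summable_sq_norm (hA i j)
  simpa using h.norm.eventually (ge_mem_nhds (by simpa using hε))

theorem summable_sq_norm_apply {ι m n 𝕜 : Type*} [Fintype m] [Fintype n] [NormedField 𝕜]
    {A : ι → Matrix m n 𝕜} (hA : Summable fun k => ∑ i, ∑ j, ‖A k i j‖ ^ 2) (i : m) (j : n) :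
    Summable fun k => ‖A k i j‖ ^ 2 :=
  hA.of_nonneg_of_le (fun _ => sq_nonneg _) fun k =>
    (single_le_sum (f := fun j => ‖A k i j‖ ^ 2) (fun _ _ => sq_nonneg _) (mem_univ j)).trans
      (single_le_sum (f := fun i => ∑ j, ‖A k i j‖ ^ 2)
        (fun _ _ => sum_nonneg fun _ _ => sq_nonneg _) (mem_univ i))

theorem tendsto_sum_range_of_tendsto_sum_Icc_one {M : Type*} [AddCommMonoid M]
    [TopologicalSpace M] [ContinuousAdd M] {f : ℕ → M} {L : M}
    (h : Tendsto (fun N => ∑ n ∈ Icc 1 N, f n) atTop (𝓝 L)) :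
    Tendsto (fun N => ∑ n ∈ range N, f n) atTop (𝓝 (f 0 + L)) := by
  rw [← tendsto_add_atTop_iff_nat 1]
  refine (h.const_add (f 0)).congr fun N => ?_
  rw [range_eq_Ico, sum_eq_sum_Ico_succ_bot (by omega)]
  rfl

section Dichotomy

variable {B L : ℂ} {A : ℕ → Matrix (Fin 2) (Fin 2) ℂ} {y : ℕ → Fin 2 → ℂ}

theorem exists_tendsto_pow_smul_of_frequently_norm_le (hB : B ≠ 0) (hB1 : ‖B‖ < 1)
    (hA : ∀ i j, Summable fun n => ‖A n i j‖ ^ 2)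
    (hA00 : Tendsto (fun N => ∑ n ∈ range N, A n 0 0) atTop (𝓝 L))
    (hy : ∀ᶠ n in atTop, y (n + 1) = (diagonal ![B⁻¹, B] + A n) *ᵥ y n)
    (hy0 : ∀ᶠ n in atTop, y n ≠ 0) (hcone : ∃ᶠ n in atTop, ‖y n 1‖ ≤ ‖y n 0‖) :
    ∃ c ≠ 0, Tendsto (fun n => B ^ n • y n) atTop (𝓝 ![c, 0]) := by
  obtain ⟨ε, hε, hε3⟩ : ∃ ε > 0, 3 * ε ≤ 1 - ‖B‖ := ⟨(1 - ‖B‖) / 3, by linarith, by linarith⟩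
  obtain ⟨N, hN⟩ :=
    eventually_atTop.mp ((hy.and hy0).and (eventually_forall_norm_apply_le hA hε))
  obtain ⟨n₁, hn₁N, hn₁⟩ := frequently_atTop.mp hcone N
  have hstep : ∀ n ≥ n₁, y n 0 ≠ 0 → ‖y n 1‖ ≤ ‖y n 0‖ →
      ‖y n 0‖ ≤ ‖y (n + 1) 0‖ ∧ ‖y (n + 1) 1‖ ≤ ‖y (n + 1) 0‖ ∧
        ‖y (n + 1) 1‖ / ‖y (n + 1) 0‖ ≤ (‖B‖ + ε) * (‖y n 1‖ / ‖y n 0‖) + ‖A n 1 0‖ :=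
    fun n hn => cone_step_of_norm_one_le_norm_zero hB hε3
      (hN n (hn₁N.trans hn)).2 (hN n (hn₁N.trans hn)).1.1
  have hinv : ∀ n ≥ n₁, y n 0 ≠ 0 ∧ ‖y n 1‖ ≤ ‖y n 0‖ := by
    intro n hn
    induction n, hn using Nat.le_induction with
    | base =>
      refine ⟨fun h0 => (hN n₁ hn₁N).1.2 ?_, hn₁⟩
      ext i
      fin_cases i
      · exact h0
      · simpa [h0] using hn₁
    | succ n hn ih =>
      obtain ⟨hgrow, hcone', -⟩ := hstep n hn ih.1 ih.2
      exact ⟨norm_pos_iff.mp ((norm_pos_iff.mpr ih.1).trans_le hgrow), hcone'⟩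
  have hratio : Summable fun n => (‖y n 1‖ / ‖y n 0‖) ^ 2 := by
    refine summable_sq_of_eventually_le_mul_add (θ := ‖B‖ + ε) (by positivity) (by linarith)
      (fun n => by positivity) (hA 1 0) ?_
    filter_upwards [eventually_ge_atTop n₁] with n hn
    exact (hstep n hn (hinv n hn).1 (hinv n hn).2).2.2
  have hrec : ∀ᶠ n in atTop,
      y (n + 1) 0 = (B⁻¹ + A n 0 0) * y n 0 + A n 0 1 * y n 1 := by
    filter_upwards [hy] with n hn
    rw [hn, diagonal_add_mulVec_apply_zero]
  obtain ⟨c, hc, h0, h1⟩ := exists_tendsto_inv_pow_mul_of_summable_sq_ratio (inv_ne_zero hB) hrec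
    (eventually_atTop.mpr ⟨n₁, fun n hn => (hinv n hn).1⟩) hratio hA00 (hA 0 0) (hA 0 1)
  simp only [inv_inv] at h0 h1
  exact ⟨c, hc, tendsto_nhds_vecCons_two h0 h1⟩

theorem exists_tendsto_inv_pow_smul_of_eventually_norm_lt (hB : B ≠ 0) (hB1 : ‖B‖ < 1)
    (hA : ∀ i j, Summable fun n => ‖A n i j‖ ^ 2)
    (hA11 : Tendsto (fun N => ∑ n ∈ range N, A n 1 1) atTop (𝓝 L))
    (hy : ∀ᶠ n in atTop, y (n + 1) = (diagonal ![B⁻¹, B] + A n) *ᵥ y n)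
    (hcone : ∀ᶠ n in atTop, ‖y n 0‖ < ‖y n 1‖) :
    ∃ c ≠ 0, Tendsto (fun n => B⁻¹ ^ n • y n) atTop (𝓝 ![0, c]) := by
  obtain ⟨ε, hε, hε3⟩ : ∃ ε > 0, 3 * ε ≤ 1 - ‖B‖ := ⟨(1 - ‖B‖) / 3, by linarith, by linarith⟩
  have hy1 : ∀ᶠ n in atTop, y n 1 ≠ 0 := by
    filter_upwards [hcone] with n hn using norm_pos_iff.mp ((norm_nonneg _).trans_lt hn)
  have hratio : Summable fun n => (‖y n 0‖ / ‖y n 1‖) ^ 2 := by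
    refine summable_sq_of_eventually_le_mul_succ_add (θ := ‖B‖ + 2 * ε) (K := 1)
      (by positivity) (by linarith) (fun n => by positivity) ?_ (hA 0 1) ?_
    · filter_upwards [hcone] with n hn using div_le_one_of_le₀ hn.le (norm_nonneg _)
    · filter_upwards [hy, hcone, (tendsto_add_atTop_nat 1).eventually hcone,
        eventually_forall_norm_apply_le hA hε] with n hyn hn hn1 hsmall
      exact ratio_le_of_norm_zero_lt_norm_one hB hε3 hsmall hyn hn hn1
  have hrec : ∀ᶠ n in atTop,
      y (n + 1) 1 = (B + A n 1 1) * y n 1 + A n 1 0 * y n 0 := by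
    filter_upwards [hy] with n hn
    rw [hn, diagonal_add_mulVec_apply_one, add_comm]
  obtain ⟨c, hc, h1, h0⟩ :=
    exists_tendsto_inv_pow_mul_of_summable_sq_ratio hB hrec hy1 hratio hA11 (hA 1 1) (hA 1 0)
  exact ⟨c, hc, tendsto_nhds_vecCons_two h0 h1⟩

end Dichotomy

theorem tendsto_pow_smul_zero_of_tendsto_inv_pow_smul {𝕜 E : Type*} [NormedField 𝕜]
    [NormedAddCommGroup E] [NormedSpace 𝕜 E] {B : 𝕜} (hB : B ≠ 0) (hB1 : ‖B‖ < 1)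
    {y : ℕ → E} {v : E} (h : Tendsto (fun n => B⁻¹ ^ n • y n) atTop (𝓝 v)) :
    Tendsto (fun n => B ^ n • y n) atTop (𝓝 0) := by
  have hpow : Tendsto (fun n => (B ^ 2) ^ n) atTop (𝓝 0) :=
    tendsto_pow_atTop_nhds_zero_of_norm_lt_one (by rw [norm_pow]; nlinarith [norm_nonneg B])
  refine (by simpa using hpow.smul h : Tendsto _ _ _).congr fun n => ?_
  rw [smul_smul]
  congr 1
  field_simp
  ring

/-- **Transfer-matrix dichotomy.** Let `0 < |B| < 1`, `Λ = diag(B⁻¹, B)`, and let `{A_n}`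
be 2×2 matrices with `Σ ‖A_n‖² < ∞` (stated via the entrywise square sum, equivalent to
any fixed matrix norm), `Λ + A_n` invertible, and both diagonal partial sums
`Σ_{n=1}^N (A_n)_{1,1}`, `Σ_{n=1}^N (A_n)_{2,2}` convergent. Then every nonzero solution
`(φ_n, ψ_n)` of the recursion satisfies exactly one of: `B^n (φ_n, ψ_n) → (c_1, 0)` with
`c_1 ≠ 0`, or `B^{-n} (φ_n, ψ_n) → (0, c_2)` with `c_2 ≠ 0`. -/
theorem transfer_matrix_dichotomy
    (B : ℂ) (hB0 : 0 < ‖B‖) (hB1 : ‖B‖ < 1)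
    (A : ℕ → Matrix (Fin 2) (Fin 2) ℂ)
    (hA2 : Summable fun n : ℕ => ∑ i : Fin 2, ∑ j : Fin 2, ‖A n i j‖ ^ 2)
    (hinv : ∀ n, 1 ≤ n → IsUnit (Matrix.diagonal ![B⁻¹, B] + A n))
    (h11 : ∃ L : ℂ, Tendsto (fun N => ∑ n ∈ Finset.Icc 1 N, A n 0 0) atTop (𝓝 L))
    (h22 : ∃ L : ℂ, Tendsto (fun N => ∑ n ∈ Finset.Icc 1 N, A n 1 1) atTop (𝓝 L))
    (y : ℕ → Fin 2 → ℂ) (hy1 : y 1 ≠ 0)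
    (hrec : ∀ n, 1 ≤ n → y (n + 1) = (Matrix.diagonal ![B⁻¹, B] + A n).mulVec (y n)) :
    Xor'
      (∃ c : ℂ, c ≠ 0 ∧ Tendsto (fun n : ℕ => B ^ n • y n) atTop (𝓝 ![c, 0]))
      (∃ c : ℂ, c ≠ 0 ∧ Tendsto (fun n : ℕ => B⁻¹ ^ n • y n) atTop (𝓝 ![0, c])) := by
  have hB : B ≠ 0 := norm_pos_iff.mp hB0
  have hA := summable_sq_norm_apply hA2
  obtain ⟨L₁, hL₁⟩ := h11
  obtain ⟨L₂, hL₂⟩ := h22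
  have hy : ∀ᶠ n in atTop, y (n + 1) = (diagonal ![B⁻¹, B] + A n) *ᵥ y n :=
    eventually_atTop.mpr ⟨1, hrec⟩
  have hy0 : ∀ n ≥ 1, y n ≠ 0 := by
    intro n hn
    induction n, hn using Nat.le_induction with
    | base => exact hy1
    | succ n hn ih =>
      rw [hrec n hn]
      exact fun h =>
        ih (mulVec_injective_iff_isUnit.mpr (hinv n hn) (h.trans (mulVec_zero _).symm))
  refine (xor_iff_or_and_not_and _ _).mpr ⟨?_, fun ⟨⟨c, hc, h₁⟩, ⟨_, _, h₂⟩⟩ => ?_⟩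
  · by_cases hcone : ∃ᶠ n in atTop, ‖y n 1‖ ≤ ‖y n 0‖
    · exact .inl (exists_tendsto_pow_smul_of_frequently_norm_le hB hB1 hA
        (tendsto_sum_range_of_tendsto_sum_Icc_one hL₁) hy (eventually_atTop.mpr ⟨1, hy0⟩) hcone)
    · refine .inr (exists_tendsto_inv_pow_smul_of_eventually_norm_lt hB hB1 hA
        (tendsto_sum_range_of_tendsto_sum_Icc_one hL₂) hy ?_)
      simpa only [not_frequently, not_le] using hcone
  · have h0 := tendsto_nhds_unique h₁ (tendsto_pow_smul_zero_of_tendsto_inv_pow_smul hB hB1 h₂)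
    exact hc (by simpa using congrFun h0 0)
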